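/- If A is an n × n doubly stochastic matrix (nonnegative entries, all row sums and all column sums equal to 1), then sm(A) = 1/n. -/

import Mathlib

/-!
For positive `x, y`, apply the weighted AM–GM inequality to the `n²` numbers `x i * y j` with
weights `A i j / n`, which sum to `1`. Because every row and every column of `A` sums to `1`, the
weighted geometric mean collapses to `gm x * gm y`, while the weighted arithmetic mean is
`xᵀ A y / n`. Hence `xᵀ A y / (gm x * gm y) ≥ n`, with equality at `x = y = 1`.
-/

open scoped BigOperators Kronecker
open Matrix

/-- The permanent of a square real matrix. -/
noncomputable def perm {ι : Type*} [Fintype ι] [DecidableEq ι] (A : Matrix ι ι ℝ) : ℝ :=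
  ∑ σ : Equiv.Perm ι, ∏ i, A i (σ i)

/-- The permanental mean `pm A = (per A / n!) ^ (1/n)`. -/
noncomputable def pm {ι : Type*} [Fintype ι] [DecidableEq ι] (A : Matrix ι ι ℝ) : ℝ :=
  (perm A / (Nat.factorial (Fintype.card ι) : ℝ)) ^ ((Fintype.card ι : ℝ)⁻¹)

/-- The geometric mean of the entries of a vector. -/
noncomputable def gmVec {ι : Type*} [Fintype ι] (v : ι → ℝ) : ℝ :=
  (∏ i, v i) ^ ((Fintype.card ι : ℝ)⁻¹)

/-- The set of values whose infimum defines the scaling mean. -/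
noncomputable def smSet {ι κ : Type*} [Fintype ι] [Fintype κ] (A : Matrix ι κ ℝ) : Set ℝ :=
  {r : ℝ | ∃ x : ι → ℝ, ∃ y : κ → ℝ, (∀ i, 0 < x i) ∧ (∀ j, 0 < y j) ∧
    r = (∑ i, ∑ j, x i * A i j * y j) / (gmVec x * gmVec y)}

/-- The scaling mean `sm A = (1/(mn)) · inf over positive vectors x, y of xᵀAy/(gm x · gm y)`. -/
noncomputable def sm {ι κ : Type*} [Fintype ι] [Fintype κ] (A : Matrix ι κ ℝ) : ℝ :=
  ((Fintype.card ι : ℝ) * (Fintype.card κ : ℝ))⁻¹ * sInf (smSet A)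

open Finset

variable {ι κ : Type*} [Fintype ι] [Fintype κ]

lemma gmVec_pos {v : ι → ℝ} (hv : ∀ i, 0 < v i) : 0 < gmVec v :=
  Real.rpow_pos_of_pos (prod_pos fun i _ => hv i) _

lemma gmVec_one : gmVec (1 : ι → ℝ) = 1 := by
  simp [gmVec]

lemma prod_prod_rpow_div_card_eq_gmVec {x : ι → ℝ} (hx : ∀ i, 0 < x i) {w : ι → κ → ℝ}
    (hw : ∀ i, ∑ j, w i j = 1) :
    ∏ i, ∏ j, x i ^ (w i j / Fintype.card ι) = gmVec x := by
  have hrow (i : ι) : ∏ j, x i ^ (w i j / Fintype.card ι) = x i ^ (Fintype.card ι : ℝ)⁻¹ := by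
    rw [← Real.rpow_sum_of_pos (hx i), ← sum_div, hw i, one_div]
  rw [prod_congr rfl fun i _ => hrow i, Real.finsetProd_rpow _ _ fun i _ => (hx i).le, gmVec]

section DoublyStochastic

variable [DecidableEq ι] {A : Matrix ι ι ℝ}

lemma card_mul_gmVec_mul_gmVec_le (hA : A ∈ doublyStochastic ℝ ι) {x y : ι → ℝ}
    (hx : ∀ i, 0 < x i) (hy : ∀ j, 0 < y j) :
    Fintype.card ι * (gmVec x * gmVec y) ≤ ∑ i, ∑ j, x i * A i j * y j := by
  rcases isEmpty_or_nonempty ι with _ | _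
  · simp
  have hn : (0 : ℝ) < Fintype.card ι := by exact_mod_cast Fintype.card_pos
  have hgeom : ∏ p : ι × ι, (x p.1 * y p.2) ^ (A p.1 p.2 / Fintype.card ι)
      = gmVec x * gmVec y := by
    simp only [Fintype.prod_prod_type, Real.mul_rpow (hx _).le (hy _).le, prod_mul_distrib]
    rw [prod_prod_rpow_div_card_eq_gmVec hx (sum_row_of_mem_doublyStochastic hA), prod_comm,
      prod_prod_rpow_div_card_eq_gmVec hy
        (w := fun j i => A i j) (sum_col_of_mem_doublyStochastic hA)]
  have harith : ∑ p : ι × ι, A p.1 p.2 / Fintype.card ι * (x p.1 * y p.2)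
      = (∑ i, ∑ j, x i * A i j * y j) / Fintype.card ι := by
    simp only [Fintype.sum_prod_type, sum_div]
    exact sum_congr rfl fun i _ => sum_congr rfl fun j _ => by ring
  have hweights : ∑ p : ι × ι, A p.1 p.2 / Fintype.card ι = 1 := by
    rw [← sum_div, Fintype.sum_prod_type, div_eq_one_iff_eq hn.ne']
    simp [sum_row_of_mem_doublyStochastic hA]
  have amgm := Real.geom_mean_le_arith_mean_weighted univ _ _
    (fun p _ => div_nonneg (nonneg_of_mem_doublyStochastic hA) hn.le) hweights
    (fun p _ => (mul_pos (hx p.1) (hy p.2)).le)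
  rw [hgeom, harith, le_div_iff₀ hn] at amgm
  linarith

lemma card_mem_smSet (hA : A ∈ doublyStochastic ℝ ι) : (Fintype.card ι : ℝ) ∈ smSet A := by
  refine ⟨1, 1, fun _ => one_pos, fun _ => one_pos, ?_⟩
  simp [gmVec_one, sum_row_of_mem_doublyStochastic hA]

lemma sInf_smSet_eq_card (hA : A ∈ doublyStochastic ℝ ι) : sInf (smSet A) = Fintype.card ι := by
  have hlower : ∀ r ∈ smSet A, (Fintype.card ι : ℝ) ≤ r := by
    rintro r ⟨x, y, hx, hy, rfl⟩
    rw [le_div_iff₀ (mul_pos (gmVec_pos hx) (gmVec_pos hy))]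
    exact card_mul_gmVec_mul_gmVec_le hA hx hy
  exact le_antisymm (csInf_le ⟨_, hlower⟩ (card_mem_smSet hA))
    (le_csInf ⟨_, card_mem_smSet hA⟩ hlower)

lemma sm_eq_inv_card (hA : A ∈ doublyStochastic ℝ ι) : sm A = (Fintype.card ι : ℝ)⁻¹ := by
  rw [sm, sInf_smSet_eq_card hA, inv_mul_eq_div, div_self_mul_self']

end DoublyStochastic

/-- The scaling mean of a doubly stochastic `n × n` matrix equals `1/n`. -/
theorem stmt_6 {n : ℕ} (A : Matrix (Fin n) (Fin n) ℝ)
    (h0 : ∀ i j, 0 ≤ A i j)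
    (hrow : ∀ i, ∑ j, A i j = 1) (hcol : ∀ j, ∑ i, A i j = 1) :
    sm A = (n : ℝ)⁻¹ := by
  simpa using sm_eq_inv_card (mem_doublyStochastic_iff_sum.2 ⟨h0, hrow, hcol⟩)
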